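/- Deterministic core of Corollary 1 (recovery of the optimal action from an approximate Q-vector): let n ≥ 1, τ > 0, K_A > 0, ε' ≥ 0, and let x, y ∈ ℝⁿ be such that max_i |x_i − y_i| ≤ ε' and such that the action gap condition holds for y: for every index i with y_i < max_j y_j one has max_j y_j − y_i ≥ K_A. Then ‖softmax_τ(x) − argmaxe(y)‖₂ ≤ τ ε' + 2 n e^{−τ K_A}. -/

import Mathlib

open scoped Classical

noncomputable section

/-- `softmax_τ(x)_i = e^{τ x_i} / Σ_j e^{τ x_j}`. -/
def softmax {n : ℕ} (τ : ℝ) (x : EuclideanSpace ℝ (Fin n)) : EuclideanSpace ℝ (Fin n) :=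
  WithLp.toLp 2 fun i => Real.exp (τ * x i) / ∑ j, Real.exp (τ * x j)

/-- `argmaxe(x)_i = 1_{i ∈ argmax(x)} / |argmax(x)|`. -/
def argmaxe {n : ℕ} (x : EuclideanSpace ℝ (Fin n)) : EuclideanSpace ℝ (Fin n) :=
  WithLp.toLp 2 fun i => (if ∀ j, x j ≤ x i then (1 : ℝ) else 0)
    / (Finset.univ.filter fun j : Fin n => ∀ k, x k ≤ x j).card

lemma euclid_norm_le_sum_abs {n : ℕ} (v : EuclideanSpace ℝ (Fin n)) :
    ‖v‖ ≤ ∑ i, |v i| := by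
  rw [EuclideanSpace.norm_eq]
  have h1 : (∑ i, ‖v i‖ ^ 2) = ∑ i, |v i| ^ 2 := by
    simp [Real.norm_eq_abs]
  rw [h1]
  calc Real.sqrt (∑ i, |v i| ^ 2) ≤ Real.sqrt ((∑ i, |v i|) ^ 2) :=
        Real.sqrt_le_sqrt (Finset.sum_sq_le_sq_sum_of_nonneg (fun i _ => abs_nonneg _))
    _ = ∑ i, |v i| := Real.sqrt_sq (Finset.sum_nonneg fun i _ => abs_nonneg _)

lemma var_bound {n : ℕ} (p d : Fin n → ℝ) (ε : ℝ)
    (hp : ∀ i, 0 ≤ p i) (hsum : ∑ i, p i = 1) (hd : ∀ i, |d i| ≤ ε) :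
    ∑ i, (p i * (d i - ∑ j, p j * d j)) ^ 2 ≤ ε ^ 2 := by
  set m := ∑ j, p j * d j with hm
  have hp1 : ∀ i, p i ≤ 1 := by
    intro i
    calc p i ≤ ∑ j, p j := Finset.single_le_sum (fun j _ => hp j) (Finset.mem_univ i)
      _ = 1 := hsum
  have h1 : ∑ i, (p i * (d i - m)) ^ 2 ≤ ∑ i, p i * (d i - m) ^ 2 := by
    apply Finset.sum_le_sum
    intro i _
    have he : (p i * (d i - m)) ^ 2 = p i ^ 2 * (d i - m) ^ 2 := by ring
    rw [he]
    exact mul_le_mul_of_nonneg_right (by nlinarith [hp i, hp1 i]) (sq_nonneg _)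
  have h2 : ∑ i, p i * (d i - m) ^ 2 = (∑ i, p i * d i ^ 2) - m ^ 2 := by
    have he : ∀ i, p i * (d i - m) ^ 2
        = p i * d i ^ 2 - 2 * m * (p i * d i) + m ^ 2 * p i := fun i => by ring
    simp_rw [he]
    rw [Finset.sum_add_distrib, Finset.sum_sub_distrib, ← Finset.mul_sum, ← Finset.mul_sum,
      hsum, ← hm]
    ring
  have h3 : ∑ i, p i * d i ^ 2 ≤ ε ^ 2 := by
    calc ∑ i, p i * d i ^ 2 ≤ ∑ i, p i * ε ^ 2 := by
          apply Finset.sum_le_sum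
          intro i _
          have := abs_le.mp (hd i)
          exact mul_le_mul_of_nonneg_left (by nlinarith) (hp i)
      _ = ε ^ 2 := by rw [← Finset.sum_mul, hsum, one_mul]
  nlinarith [sq_nonneg m]

lemma softmax_lipschitz {n : ℕ} (hn : 1 ≤ n) (τ ε : ℝ) (hτ : 0 < τ) (hε : 0 ≤ ε)
    (x y : EuclideanSpace ℝ (Fin n)) (hxy : ∀ i, |x i - y i| ≤ ε) :
    ‖softmax τ x - softmax τ y‖ ≤ τ * ε := by
  haveI : Nonempty (Fin n) := ⟨⟨0, hn⟩⟩
  set d : Fin n → ℝ := fun i => x i - y i with hd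
  set N : ℝ → Fin n → ℝ := fun t i => Real.exp (τ * (y i + t * d i)) with hN
  set S : ℝ → ℝ := fun t => ∑ j, N t j with hS
  have hNpos : ∀ t i, 0 < N t i := fun t i => Real.exp_pos _
  have hSpos : ∀ t, 0 < S t := fun t =>
    Finset.sum_pos (fun j _ => hNpos t j) Finset.univ_nonempty
  set g : ℝ → Fin n → ℝ := fun t i => N t i / S t with hg
  set g' : ℝ → Fin n → ℝ :=
    fun t i => τ * (N t i / S t) * (d i - ∑ j, (N t j / S t) * d j) with hg'
  -- coordinatewise derivatives
  have hNder : ∀ t i, HasDerivAt (fun s => N s i) (N t i * (τ * d i)) t := by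
    intro t i
    have h1 : HasDerivAt (fun s : ℝ => τ * (y i + s * d i)) (τ * d i) t := by
      simpa using (((hasDerivAt_id t).mul_const (d i)).const_add (y i)).const_mul τ
    simpa [hN] using h1.exp
  have hSder : ∀ t, HasDerivAt S (∑ j, N t j * (τ * d j)) t := by
    intro t
    exact HasDerivAt.fun_sum fun j _ => hNder t j
  have hgder : ∀ t, HasDerivAt g (g' t) t := by
    intro t
    rw [hasDerivAt_pi]
    intro i
    have hdiv := (hNder t i).div (hSder t) (ne_of_gt (hSpos t))
    convert hdiv using 1
    show τ * (N t i / S t) * (d i - ∑ j, (N t j / S t) * d j) = _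
    have e1 : ∑ j, (N t j / S t) * d j = (∑ j, N t j * d j) / S t := by
      simp_rw [div_mul_eq_mul_div]
      rw [← Finset.sum_div]
    have e2 : ∑ j, N t j * (τ * d j) = τ * ∑ j, N t j * d j := by
      rw [Finset.mul_sum]
      exact Finset.sum_congr rfl fun j _ => by ring
    rw [e1, e2]
    have hSne := ne_of_gt (hSpos t)
    field_simp
    all_goals rfl
  -- lift to EuclideanSpace
  set e : (Fin n → ℝ) ≃L[ℝ] EuclideanSpace ℝ (Fin n) :=
    (PiLp.continuousLinearEquiv 2 ℝ (fun _ : Fin n => ℝ)).symm with he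
  set F : ℝ → EuclideanSpace ℝ (Fin n) := fun t => e (g t) with hF
  have hFder : ∀ t, HasDerivAt F (e (g' t)) t := by
    intro t
    exact (e.toContinuousLinearMap.hasFDerivAt).comp_hasDerivAt t (hgder t)
  have happ : ∀ (w : Fin n → ℝ) i, (e w) i = w i := fun w i => rfl
  -- the derivative bound
  have hbound : ∀ t, ‖e (g' t)‖ ≤ τ * ε := by
    intro t
    rw [EuclideanSpace.norm_eq]
    have h1 : (∑ i, ‖(e (g' t)) i‖ ^ 2) = ∑ i, (g' t i) ^ 2 := by
      simp [happ, Real.norm_eq_abs, sq_abs]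
    rw [h1]
    have hvar : ∑ i, (g' t i) ^ 2 ≤ (τ * ε) ^ 2 := by
      have hpnn : ∀ i, 0 ≤ N t i / S t := fun i =>
        le_of_lt (div_pos (hNpos t i) (hSpos t))
      have hpsum : ∑ i, N t i / S t = 1 := by
        rw [← Finset.sum_div]
        exact div_self (ne_of_gt (hSpos t))
      have hv := var_bound (fun i => N t i / S t) d ε hpnn hpsum hxy
      have he2 : ∀ i, (g' t i) ^ 2
          = τ ^ 2 * ((N t i / S t) * (d i - ∑ j, (N t j / S t) * d j)) ^ 2 := by
        intro i; rw [hg']; ring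
      calc ∑ i, (g' t i) ^ 2
          = τ ^ 2 * ∑ i, ((N t i / S t) * (d i - ∑ j, (N t j / S t) * d j)) ^ 2 := by
            rw [Finset.mul_sum]; exact Finset.sum_congr rfl fun i _ => he2 i
        _ ≤ τ ^ 2 * ε ^ 2 := by
            exact mul_le_mul_of_nonneg_left hv (sq_nonneg τ)
        _ = (τ * ε) ^ 2 := by ring
    calc Real.sqrt (∑ i, (g' t i) ^ 2) ≤ Real.sqrt ((τ * ε) ^ 2) :=
          Real.sqrt_le_sqrt hvar
      _ = τ * ε := Real.sqrt_sq (by positivity)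
  -- endpoints
  have hF1 : F 1 = softmax τ x := by
    refine PiLp.ext fun i => ?_
    show N 1 i / S 1 = Real.exp (τ * x i) / ∑ j, Real.exp (τ * x j)
    have harg : ∀ i, y i + 1 * d i = x i := by
      intro i; simp only [hd]; ring
    simp only [hN, hS, harg]
  have hF0 : F 0 = softmax τ y := by
    refine PiLp.ext fun i => ?_
    show N 0 i / S 0 = Real.exp (τ * y i) / ∑ j, Real.exp (τ * y j)
    have harg : ∀ i, y i + 0 * d i = y i := by intro i; ring
    simp only [hN, hS, harg]
  have := norm_image_sub_le_of_norm_deriv_le_segment'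
    (f := F) (f' := fun t => e (g' t)) (a := 0) (b := 1) (C := τ * ε)
    (fun t _ => (hFder t).hasDerivWithinAt)
    (fun t _ => hbound t) 1 (by norm_num)
  rw [hF1, hF0] at this
  simpa using this

lemma softmax_near_argmaxe {n : ℕ} (hn : 1 ≤ n) (τ KA : ℝ) (hτ : 0 < τ) (hKA : 0 < KA)
    (y : EuclideanSpace ℝ (Fin n))
    (hgap : ∀ i, y i < (⨆ j, y j) → KA ≤ (⨆ j, y j) - y i) :
    ‖softmax τ y - argmaxe y‖ ≤ 2 * n * Real.exp (-τ * KA) := by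
  haveI : Nonempty (Fin n) := ⟨⟨0, hn⟩⟩
  obtain ⟨i₀, hi₀⟩ := Finite.exists_max y
  have hsup : (⨆ j, y j) = y i₀ :=
    le_antisymm (ciSup_le hi₀) (le_ciSup (Set.finite_range y).bddAbove i₀)
  set A : Finset (Fin n) := Finset.univ.filter (fun j : Fin n => ∀ k, y k ≤ y j) with hA
  have hi₀A : i₀ ∈ A := by simp [hA, hi₀]
  have hk1 : 1 ≤ A.card := Finset.card_pos.mpr ⟨i₀, hi₀A⟩
  have hkpos : (0:ℝ) < A.card := by exact_mod_cast hk1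
  set S : ℝ := ∑ j, Real.exp (τ * y j) with hSdef
  have hSpos : 0 < S :=
    Finset.sum_pos (fun j _ => Real.exp_pos _) ⟨i₀, Finset.mem_univ i₀⟩
  have hyA : ∀ i ∈ A, y i = y i₀ := by
    intro i hi
    rw [hA, Finset.mem_filter] at hi
    exact le_antisymm (hi₀ i) (hi.2 i₀)
  have hkS : (A.card : ℝ) * Real.exp (τ * y i₀) ≤ S := by
    calc (A.card : ℝ) * Real.exp (τ * y i₀) = ∑ i ∈ A, Real.exp (τ * y i) := by
          rw [Finset.sum_congr rfl (fun i hi => by rw [hyA i hi]), Finset.sum_const,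
            nsmul_eq_mul]
      _ ≤ S := Finset.sum_le_sum_of_subset_of_nonneg (Finset.subset_univ A)
            (fun i _ _ => (Real.exp_pos _).le)
  -- coordinate values of argmaxe
  have ha_mem : ∀ i ∈ A, argmaxe y i = 1 / A.card := by
    intro i hi
    rw [hA, Finset.mem_filter] at hi
    simp only [argmaxe, PiLp.toLp_apply, if_pos hi.2]
    try rw [hA]
  have ha_nmem : ∀ i ∉ A, argmaxe y i = 0 := by
    intro i hi
    rw [hA, Finset.mem_filter] at hi
    have : ¬ ∀ k, y k ≤ y i := fun h => hi ⟨Finset.mem_univ i, h⟩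
    simp only [argmaxe, PiLp.toLp_apply, if_neg this, zero_div]
  -- coordinate bounds of softmax
  have hq_nn : ∀ i, 0 ≤ softmax τ y i := fun i =>
    le_of_lt (div_pos (Real.exp_pos _) hSpos)
  have hq_mem : ∀ i ∈ A, softmax τ y i ≤ 1 / A.card := by
    intro i hi
    show Real.exp (τ * y i) / S ≤ 1 / A.card
    rw [hyA i hi, div_le_div_iff₀ hSpos hkpos]
    nlinarith [hkS]
  have hq_nmem : ∀ i ∉ A, softmax τ y i ≤ Real.exp (-τ * KA) := by
    intro i hi
    have hlt : y i < y i₀ := by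
      rw [hA, Finset.mem_filter] at hi
      have : ¬ ∀ k, y k ≤ y i := fun h => hi ⟨Finset.mem_univ i, h⟩
      push_neg at this
      obtain ⟨k, hk⟩ := this
      exact lt_of_lt_of_le hk (hi₀ k)
    have hyi : y i ≤ y i₀ - KA := by
      have := hgap i (by rw [hsup]; exact hlt)
      rw [hsup] at this
      linarith
    show Real.exp (τ * y i) / S ≤ Real.exp (-τ * KA)
    have h1 : Real.exp (τ * y i) ≤ Real.exp (τ * y i₀) * Real.exp (-τ * KA) := by
      rw [← Real.exp_add]
      apply Real.exp_le_exp.mpr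
      nlinarith
    calc Real.exp (τ * y i) / S
        ≤ (Real.exp (τ * y i₀) * Real.exp (-τ * KA)) / S := by gcongr
      _ ≤ (Real.exp (τ * y i₀) * Real.exp (-τ * KA)) / ((A.card : ℝ) * Real.exp (τ * y i₀)) := by
          gcongr <;> first | exact hkS | positivity
      _ = Real.exp (-τ * KA) / A.card := by
          rw [div_eq_div_iff (by positivity) (ne_of_gt hkpos)]
          ring
      _ ≤ Real.exp (-τ * KA) := by
          apply div_le_self (Real.exp_pos _).le
          exact_mod_cast hk1
  -- total mass is 1
  have hqsum : ∑ i, softmax τ y i = 1 := by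
    show ∑ i, Real.exp (τ * y i) / S = 1
    rw [← Finset.sum_div, ← hSdef, div_self (ne_of_gt hSpos)]
  -- now the ℓ¹ bound
  have hsub : ∀ i, (softmax τ y - argmaxe y) i = softmax τ y i - argmaxe y i :=
    fun i => rfl
  have key : ∑ i, |softmax τ y i - argmaxe y i|
      ≤ 2 * n * Real.exp (-τ * KA) := by
    have hsplit : ∑ i, |softmax τ y i - argmaxe y i|
        = (∑ i ∈ A, |softmax τ y i - argmaxe y i|)
          + ∑ i ∈ Aᶜ, |softmax τ y i - argmaxe y i| :=
      (Finset.sum_add_sum_compl A _).symm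
    have hA_eq : ∑ i ∈ A, |softmax τ y i - argmaxe y i|
        = ∑ i ∈ A, (1 / A.card - softmax τ y i) := by
      apply Finset.sum_congr rfl
      intro i hi
      rw [ha_mem i hi, abs_of_nonpos (by linarith [hq_mem i hi])]
      ring
    have hAc_eq : ∑ i ∈ Aᶜ, |softmax τ y i - argmaxe y i|
        = ∑ i ∈ Aᶜ, softmax τ y i := by
      apply Finset.sum_congr rfl
      intro i hi
      rw [ha_nmem i (Finset.mem_compl.mp hi), sub_zero, abs_of_nonneg (hq_nn i)]
    have hbalance : ∑ i ∈ A, (1 / (A.card : ℝ) - softmax τ y i)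
        = ∑ i ∈ Aᶜ, softmax τ y i := by
      have h1 : ∑ i ∈ A, (1 / (A.card : ℝ)) = 1 := by
        rw [Finset.sum_const, nsmul_eq_mul]
        exact mul_one_div_cancel (ne_of_gt hkpos)
      have h2 : (∑ i ∈ A, softmax τ y i) + ∑ i ∈ Aᶜ, softmax τ y i = 1 := by
        rw [Finset.sum_add_sum_compl, hqsum]
      rw [Finset.sum_sub_distrib, h1]
      linarith
    have hAc_bound : ∑ i ∈ Aᶜ, softmax τ y i ≤ n * Real.exp (-τ * KA) := by
      calc ∑ i ∈ Aᶜ, softmax τ y i ≤ ∑ _i ∈ Aᶜ, Real.exp (-τ * KA) :=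
            Finset.sum_le_sum fun i hi => hq_nmem i (Finset.mem_compl.mp hi)
        _ = Aᶜ.card * Real.exp (-τ * KA) := by
            rw [Finset.sum_const, nsmul_eq_mul]
        _ ≤ n * Real.exp (-τ * KA) := by
            apply mul_le_mul_of_nonneg_right _ (Real.exp_pos _).le
            have : Aᶜ.card ≤ Fintype.card (Fin n) := Finset.card_le_univ _
            rw [Fintype.card_fin] at this
            exact_mod_cast this
    rw [hsplit, hA_eq, hAc_eq, hbalance]
    linarith
  calc ‖softmax τ y - argmaxe y‖ ≤ ∑ i, |(softmax τ y - argmaxe y) i| :=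
        euclid_norm_le_sum_abs _
    _ = ∑ i, |softmax τ y i - argmaxe y i| := by simp_rw [hsub]
    _ ≤ 2 * n * Real.exp (-τ * KA) := key

/-- Deterministic core of Corollary 1: recovery of the optimal action from an approximate
`Q`-vector. If `max_i |x_i − y_i| ≤ ε'` and `y` satisfies the action gap condition with gap
`K_A`, then `‖softmax_τ(x) − argmaxe(y)‖₂ ≤ τ ε' + 2 n e^{−τ K_A}`. -/
theorem softmax_argmaxe_recovery {n : ℕ} (hn : 1 ≤ n)
    (τ KA ε' : ℝ) (hτ : 0 < τ) (hKA : 0 < KA) (hε' : 0 ≤ ε')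
    (x y : EuclideanSpace ℝ (Fin n))
    (hxy : ∀ i, |x i - y i| ≤ ε')
    (hgap : ∀ i, y i < (⨆ j, y j) → KA ≤ (⨆ j, y j) - y i) :
    ‖softmax τ x - argmaxe y‖ ≤ τ * ε' + 2 * n * Real.exp (-τ * KA) := by
  calc ‖softmax τ x - argmaxe y‖
      ≤ ‖softmax τ x - softmax τ y‖ + ‖softmax τ y - argmaxe y‖ :=
        norm_sub_le_norm_sub_add_norm_sub _ _ _
    _ ≤ τ * ε' + 2 * n * Real.exp (-τ * KA) :=
        add_le_add (softmax_lipschitz hn τ ε' hτ hε' x y hxy)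
          (softmax_near_argmaxe hn τ KA hτ hKA y hgap)
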